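/- Let h = h₁ + ⋯ + h_d ∈ ℍ_d. Then the unique solution of the minimization problem min{‖g‖ : g ∈ ℍ_d, g(t) ≥ h(t) for all t ∈ [0,∞)^d} is h̲ = Pr_{V₂} h, and moreover Pr_{V₂} h = Pr_{V₁} h₁ + Pr_{V₁} h₂ + ⋯ + Pr_{V₁} h_d (i.e., the i-th component of Pr_{V₂} h is Pr_{V₁} h_i). -/

import Mathlib

open MeasureTheory Set Filter
open scoped ENNReal NNReal InnerProductSpace

noncomputable section

/-- Lebesgue measure on `(0, ∞)`. -/
def muPos : Measure ℝ := volume.restrict (Set.Ioi (0:ℝ))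

/-- `L²([0,∞))`, the space of derivatives.  It is isometric to the Cameron–Martin
space `ℍ₁` of the Wiener process via `h ↦ h'`, `h(t) = ∫₀ᵗ h'(s) ds`; we identify
`ℍ₁` with this Hilbert space. -/
abbrev E : Type := Lp ℝ 2 muPos

/-- The Cameron–Martin function with derivative `φ`:  `t ↦ ∫₀ᵗ φ(s) ds`. -/
def primitive (φ : E) (t : ℝ) : ℝ := ∫ s in Set.Ioc (0:ℝ) t, φ s

/-- `V₁`: elements of `ℍ₁` whose derivative admits a non-increasing version on `[0,∞)`. -/
def V1 : Set E := {φ | ∃ ψ : ℝ → ℝ, AntitoneOn ψ (Set.Ici 0) ∧ (⇑φ) =ᵐ[muPos] ψ}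

/-- The polar cone of a set in a real inner product space. -/
def polar {H : Type*} [NormedAddCommGroup H] [InnerProductSpace ℝ H] (A : Set H) : Set H :=
  {x | ∀ y ∈ A, ⟪x, y⟫_ℝ ≤ 0}

/-- `p` is the metric projection of `x` on `A` (the nearest point of `A` to `x`). -/
def IsProj {H : Type*} [NormedAddCommGroup H] (A : Set H) (x p : H) : Prop :=
  p ∈ A ∧ ∀ y ∈ A, ‖x - p‖ ≤ ‖x - y‖

/-- `ℍ_d` as a Hilbert space: `d`-tuples of elements of `ℍ₁` (identified with their
derivatives), with inner product `⟪h,g⟫ = ∑ i, ⟪hᵢ, gᵢ⟫`. -/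
abbrev HD (d : ℕ) : Type := PiLp 2 (fun _ : Fin d => E)

/-- The additive function `t ↦ ∑ i, ∫₀^{tᵢ} φᵢ(s) ds` of `ℍ_d` associated with `Φ`. -/
def addPrim {d : ℕ} (Φ : HD d) (t : Fin d → ℝ) : ℝ := ∑ i, primitive (Φ i) (t i)

/-- `V₂ = {h = h₁ + ⋯ + h_d ∈ ℍ_d : hᵢ ∈ V₁ for all i}`. -/
def V2 {d : ℕ} : Set (HD d) := {Φ | ∀ i, Φ i ∈ V1}

/-! The metric projection onto a product of closed convex sets in an `ℓ²`-sum acts componentwise,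
so `Pr_{V₂} h = ∑ Pr_{V₁} hᵢ`. For a closed convex cone `C`, the projection `p` of `x` satisfies
`⟪x - p, y⟫ ≤ 0` for `y ∈ C` and `⟪x - p, p⟫ = 0`. Testing the first against `1_{(0,t]} ∈ V₁`
gives `p ≥ h`. Conversely, if `g ≥ h` then `g - h` has nonnegative primitive; writing a
nonincreasing `ψ ≥ 0` as `∫₀^∞ 1_{u < ψ} du`, whose level sets are a.e. intervals `(0, a]`,
shows that such a function pairs nonnegatively with `V₁`. Hence
`⟪g - p, p⟫ = ⟪g - h, p⟫ + ⟪h - p, p⟫ ≥ 0`, which gives `‖p‖ ≤ ‖g‖`, with equality only for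
`g = p`. -/


section Projection

variable {H : Type*} [NormedAddCommGroup H] [InnerProductSpace ℝ H] {K : Set H} {x p y : H}

theorem IsProj.real_inner_sub_nonpos (hK : Convex ℝ K) (hp : IsProj K x p) (hy : y ∈ K) :
    ⟪x - p, y - p⟫_ℝ ≤ 0 := by
  have : Nonempty K := ⟨⟨p, hp.1⟩⟩
  have : ‖x - p‖ = ⨅ w : K, ‖x - w‖ :=
    le_antisymm (le_ciInf fun w => hp.2 w w.2)
      (ciInf_le ⟨0, by rintro _ ⟨w, rfl⟩; positivity⟩ (⟨p, hp.1⟩ : K))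
  exact (norm_eq_iInf_iff_real_inner_le_zero hK hp.1).1 this y hy

variable {C : PointedCone ℝ H}

theorem IsProj.real_inner_nonpos_of_mem_cone (hp : IsProj (C : Set H) x p) (hy : y ∈ C) :
    ⟪x - p, y⟫_ℝ ≤ 0 := by
  simpa using hp.real_inner_sub_nonpos C.convex (C.add_mem hp.1 hy)

theorem IsProj.real_inner_self_eq_zero_of_cone (hp : IsProj (C : Set H) x p) :
    ⟪x - p, p⟫_ℝ = 0 := by
  have h := hp.real_inner_sub_nonpos C.convex C.zero_mem
  rw [zero_sub, inner_neg_right] at h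
  linarith [hp.real_inner_nonpos_of_mem_cone hp.1]

end Projection

section MinimalNorm

variable {H : Type*} [NormedAddCommGroup H] [InnerProductSpace ℝ H] {g p : H}

theorem norm_sq_eq_of_real_inner_sub (g p : H) :
    ‖g‖ ^ 2 = ‖p‖ ^ 2 + 2 * ⟪g - p, p⟫_ℝ + ‖g - p‖ ^ 2 := by
  have := norm_add_sq_real p (g - p)
  rw [add_sub_cancel, real_inner_comm] at this
  linarith

theorem norm_le_of_real_inner_sub_nonneg (h : 0 ≤ ⟪g - p, p⟫_ℝ) : ‖p‖ ≤ ‖g‖ := by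
  refine (sq_le_sq₀ (norm_nonneg _) (norm_nonneg _)).1 ?_
  nlinarith [norm_sq_eq_of_real_inner_sub g p]

theorem eq_of_norm_eq_of_real_inner_sub_nonneg (h : 0 ≤ ⟪g - p, p⟫_ℝ) (hn : ‖g‖ = ‖p‖) :
    g = p := by
  have key := norm_sq_eq_of_real_inner_sub g p
  rw [hn] at key
  have : ‖g - p‖ ^ 2 = 0 := by linarith [sq_nonneg ‖g - p‖]
  simpa [sub_eq_zero] using this

end MinimalNorm

theorem IsProj.apply_of_pi {ι : Type*} [Fintype ι] {β : ι → Type*}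
    [∀ i, NormedAddCommGroup (β i)] {A : ∀ i, Set (β i)} {x p : PiLp 2 β}
    (hp : IsProj {y | ∀ i, y i ∈ A i} x p) (i : ι) : IsProj (A i) (x i) (p i) := by
  classical
  refine ⟨hp.1 i, fun y hy => ?_⟩
  set q : PiLp 2 β := WithLp.toLp 2 (Function.update p.ofLp i y)
  have hq : q ∈ {y | ∀ i, y i ∈ A i} := fun j => by
    rcases eq_or_ne j i with rfl | hj
    · simpa [q] using hy
    · simpa [q, hj] using hp.1 j
  have hsq := (sq_le_sq₀ (norm_nonneg _) (norm_nonneg _)).2 (hp.2 q hq)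
  have hrest : ∑ j ∈ Finset.univ.erase i, ‖(x - q) j‖ ^ 2
      = ∑ j ∈ Finset.univ.erase i, ‖(x - p) j‖ ^ 2 :=
    Finset.sum_congr rfl fun j hj => by simp [q, Finset.ne_of_mem_erase hj]
  have hqi : (x - q) i = x i - y := by simp [q]
  rw [PiLp.norm_sq_eq_of_L2, PiLp.norm_sq_eq_of_L2, ← Finset.add_sum_erase _ _ (Finset.mem_univ i),
    ← Finset.add_sum_erase _ _ (Finset.mem_univ i), hrest, hqi, PiLp.sub_apply] at hsq
  exact (sq_le_sq₀ (norm_nonneg _) (norm_nonneg _)).1 (by linarith)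

theorem muPos_Iio (c : ℝ) : muPos (Iio c) = ENNReal.ofReal c := by
  rw [muPos, Measure.restrict_apply measurableSet_Iio, Iio_inter_Ioi, Real.volume_Ioo, sub_zero]

theorem muPos_Ioi (c : ℝ) : muPos (Ioi c) = ∞ := by
  rw [muPos, Measure.restrict_apply measurableSet_Ioi, Ioi_inter_Ioi, Real.volume_Ioi]

theorem restrict_Iic_muPos (t : ℝ) : muPos.restrict (Iic t) = volume.restrict (Ioc 0 t) := by
  rw [muPos, Measure.restrict_restrict measurableSet_Iic, Iic_inter_Ioi]

theorem muPos_Iic_ne_top (t : ℝ) : muPos (Iic t) ≠ ∞ := by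
  rw [← Measure.restrict_apply_univ, restrict_Iic_muPos, Measure.restrict_apply_univ]
  exact measure_Ioc_lt_top.ne

instance : NullSingletonClass muPos := by unfold muPos; infer_instance

instance : SigmaFinite muPos := by unfold muPos; infer_instance

theorem MeasureTheory.MemLp.exists_abs_lt_muPos {p : ℝ≥0∞} (hp0 : p ≠ 0) (hp : p ≠ ∞) {ψ : ℝ → ℝ}
    (hψ : MemLp ψ p muPos) {c : ℝ} (hc : 0 < c) (s₀ : ℝ) : ∃ s, s₀ < s ∧ |ψ s| < c := by
  by_contra! h
  have hsub : Ioi s₀ ⊆ {s | c.toNNReal ≤ ‖ψ s‖₊} := fun s hs => by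
    simpa [← NNReal.coe_le_coe, hc.le] using h s hs
  have := (measure_mono hsub).trans_lt
    (hψ.meas_ge_lt_top hp0 hp (by simpa using hc))
  simp [muPos_Ioi] at this

theorem Antitone.nonneg_of_memLp_muPos {p : ℝ≥0∞} (hp0 : p ≠ 0) (hp : p ≠ ∞) {ψ : ℝ → ℝ}
    (hψ : Antitone ψ) (h2 : MemLp ψ p muPos) (s : ℝ) : 0 ≤ ψ s := by
  by_contra! hs
  obtain ⟨s', hss', hs'⟩ := h2.exists_abs_lt_muPos hp0 hp (neg_pos.2 hs) s
  have := hψ hss'.le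
  rw [abs_lt] at hs'
  linarith

theorem Antitone.bddAbove_lt_of_memLp_muPos {p : ℝ≥0∞} (hp0 : p ≠ 0) (hp : p ≠ ∞)
    {ψ : ℝ → ℝ} (hψ : Antitone ψ) (h2 : MemLp ψ p muPos) {u : ℝ} (hu : 0 < u) :
    BddAbove {s | u < ψ s} := by
  obtain ⟨s₀, -, hs₀⟩ := h2.exists_abs_lt_muPos hp0 hp hu 0
  refine ⟨s₀, fun s (hs : u < ψ s) => le_of_not_gt fun hlt => ?_⟩
  linarith [hψ hlt.le, le_abs_self (ψ s₀)]

theorem IsLowerSet.ae_eq_Iic_sSup {μ : Measure ℝ} [NullSingletonClass μ] {T : Set ℝ}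
    (hT : IsLowerSet T) (hb : BddAbove T) (hne : T.Nonempty) : T =ᵐ[μ] Iic (sSup T) := by
  have hIio : Iio (sSup T) ⊆ T := fun x hx => by
    obtain ⟨y, hy, hxy⟩ := exists_lt_of_lt_csSup hne hx
    exact hT hxy.le hy
  have hIic : T ⊆ Iic (sSup T) := fun x hx => le_csSup hb hx
  exact hIic.eventuallyLE.antisymm (Iio_ae_eq_Iic.symm.le.trans hIio.eventuallyLE)

theorem setIntegral_lt_antitone_nonneg {f ψ : ℝ → ℝ} (hψ : Antitone ψ)
    (hψ2 : MemLp ψ 2 muPos) (hF : ∀ t, 0 ≤ ∫ s in Iic t, f s ∂muPos) {u : ℝ} (hu : 0 < u) :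
    0 ≤ ∫ s in {s | u < ψ s}, f s ∂muPos := by
  rcases eq_empty_or_nonempty {s | u < ψ s} with hT | hT
  · simp [hT]
  have hlower : IsLowerSet {s | u < ψ s} := fun a b hba ha => lt_of_lt_of_le ha (hψ hba)
  rw [setIntegral_congr_set (hlower.ae_eq_Iic_sSup
    (hψ.bddAbove_lt_of_memLp_muPos two_ne_zero ENNReal.ofNat_ne_top hψ2 hu) hT)]
  exact hF _

theorem integral_indicator_Iio_muPos (c : ℝ) {a : ℝ} (ha : 0 ≤ a) :
    ∫ u, (Iio a).indicator (fun _ => c) u ∂muPos = c * a := by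
  rw [integral_indicator_const _ measurableSet_Iio, measureReal_def, muPos_Iio,
    ENNReal.toReal_ofReal ha, smul_eq_mul, mul_comm]

theorem integral_mul_antitone_nonneg {f ψ : ℝ → ℝ} (hf : MemLp f 2 muPos) (hψ : Antitone ψ)
    (hψ2 : MemLp ψ 2 muPos) (hF : ∀ t, 0 ≤ ∫ s in Iic t, f s ∂muPos) :
    0 ≤ ∫ s, f s * ψ s ∂muPos := by
  have hψ0 := hψ.nonneg_of_memLp_muPos two_ne_zero ENNReal.ofNat_ne_top hψ2
  -- `f s * ψ s = ∫ u in (0, ψ s), f s du`; integrate over `s` first instead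
  set g : ℝ × ℝ → ℝ := {q | q.2 < ψ q.1}.indicator fun q => f q.1
  have hsec (s : ℝ) : (fun u => g (s, u)) = (Iio (ψ s)).indicator fun _ => f s := by
    ext u; simp [g, indicator_apply]
  have hg_meas : AEStronglyMeasurable g (muPos.prod muPos) :=
    (hf.1.comp_quasiMeasurePreserving Measure.quasiMeasurePreserving_fst).indicator
      (measurableSet_lt measurable_snd (hψ.measurable.comp measurable_fst))
  have hg_int : Integrable g (muPos.prod muPos) := by
    refine (integrable_prod_iff hg_meas).2 ⟨ae_of_all _ fun s => ?_, ?_⟩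
    · rw [hsec s, integrable_indicator_iff measurableSet_Iio]
      exact integrableOn_const (by simp [muPos_Iio])
    · refine (hf.norm.integrable_mul hψ2).congr (ae_of_all _ fun s => ?_)
      have : (fun u => ‖g (s, u)‖) = (Iio (ψ s)).indicator fun _ => ‖f s‖ := by
        ext u; by_cases h : u < ψ s <;> simp [g, h]
      simp only [this, integral_indicator_Iio_muPos _ (hψ0 s), Pi.mul_apply]
  calc 0 ≤ ∫ u, ∫ s, g (s, u) ∂muPos ∂muPos := by
        refine integral_nonneg_of_ae ((ae_restrict_mem measurableSet_Ioi).mono fun u hu => ?_)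
        change 0 ≤ ∫ s, g (s, u) ∂muPos
        have : (fun s => g (s, u)) = {s | u < ψ s}.indicator f := by
          ext s; simp [g, indicator_apply]
        rw [this, integral_indicator (measurableSet_lt measurable_const hψ.measurable)]
        exact setIntegral_lt_antitone_nonneg hψ hψ2 hF hu
    _ = ∫ s, ∫ u, g (s, u) ∂muPos ∂muPos :=
        (integral_integral_swap (f := fun s u => g (s, u)) hg_int).symm
    _ = ∫ s, f s * ψ s ∂muPos := by
        congr 1; ext s
        rw [hsec s, integral_indicator_Iio_muPos _ (hψ0 s)]

theorem primitive_eq_setIntegral (φ : E) (t : ℝ) : primitive φ t = ∫ s in Iic t, φ s ∂muPos := by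
  rw [primitive, restrict_Iic_muPos]

def indicatorIic (t : ℝ) : E := indicatorConstLp 2 measurableSet_Iic (muPos_Iic_ne_top t) 1

theorem real_inner_indicatorIic (φ : E) (t : ℝ) : ⟪indicatorIic t, φ⟫_ℝ = primitive φ t := by
  rw [indicatorIic, L2.inner_indicatorConstLp_one, primitive_eq_setIntegral]

theorem primitive_sub (φ χ : E) (t : ℝ) : primitive (φ - χ) t = primitive φ t - primitive χ t := by
  simp only [← real_inner_indicatorIic, inner_sub_right]

theorem primitive_of_nonpos (φ : E) {t : ℝ} (ht : t ≤ 0) : primitive φ t = 0 := by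
  simp [primitive, Ioc_eq_empty_of_le ht]

theorem indicatorIic_mem_V1 (t : ℝ) : indicatorIic t ∈ V1 :=
  ⟨(Iic t).indicator 1, fun x _ y _ hxy => by
    by_cases hy : y ≤ t
    · simp [hy, hxy.trans hy]
    · rw [indicator_of_notMem (show y ∉ Iic t from hy)]
      exact indicator_nonneg (fun _ _ => zero_le_one) x,
    indicatorConstLp_coeFn⟩

theorem real_inner_eq_integral (φ χ : E) : ⟪φ, χ⟫_ℝ = ∫ s, φ s * χ s ∂muPos := by
  simp only [L2.inner_def, Real.inner_apply]

theorem real_inner_nonneg_of_mem_V1 {φ χ : E} (hχ : χ ∈ V1)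
    (hφ : ∀ t, 0 ≤ t → 0 ≤ primitive φ t) : 0 ≤ ⟪φ, χ⟫_ℝ := by
  obtain ⟨ψ, hψ, hχψ⟩ := hχ
  have hψ' : Antitone fun s => ψ (max s 0) := fun x y hxy =>
    hψ (le_max_right x 0) (le_max_right y 0) (max_le_max_right 0 hxy)
  have hχψ' : χ =ᵐ[muPos] fun s => ψ (max s 0) :=
    hχψ.trans ((ae_restrict_mem measurableSet_Ioi).mono fun s (hs : 0 < s) => by
      simp [max_eq_left hs.le])
  rw [real_inner_eq_integral, integral_congr_ae (hχψ'.mono fun s hs => by rw [hs])]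
  refine integral_mul_antitone_nonneg (Lp.memLp φ) hψ' ((Lp.memLp χ).ae_eq hχψ') fun t => ?_
  rw [← primitive_eq_setIntegral]
  rcases le_total 0 t with ht | ht
  · exact hφ t ht
  · rw [primitive_of_nonpos φ ht]

def V1Cone : PointedCone ℝ E where
  carrier := V1
  zero_mem' := ⟨0, fun _ _ _ _ _ => le_rfl, Lp.coeFn_zero _ _ _⟩
  add_mem' := by
    rintro φ χ ⟨ψ, hψ, hφψ⟩ ⟨ψ', hψ', hχψ'⟩
    exact ⟨ψ + ψ', hψ.add hψ', (Lp.coeFn_add φ χ).trans (hφψ.add hχψ')⟩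
  smul_mem' := by
    rintro c φ ⟨ψ, hψ, hφψ⟩
    refine ⟨(c : ℝ) • ψ, fun x hx y hy hxy => mul_le_mul_of_nonneg_left (hψ hx hy hxy) c.2,
      (Lp.coeFn_smul (c : ℝ) φ).trans (hφψ.const_smul _)⟩

theorem IsProj.primitive_le_of_V1 {φ p : E} (hp : IsProj V1 φ p) (t : ℝ) :
    primitive φ t ≤ primitive p t := by
  have := IsProj.real_inner_nonpos_of_mem_cone (C := V1Cone) hp (indicatorIic_mem_V1 t)
  rw [real_inner_comm, real_inner_indicatorIic, primitive_sub] at this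
  linarith

theorem IsProj.real_inner_sub_nonneg_of_V1 {φ p g : E} (hp : IsProj V1 φ p)
    (hg : ∀ t, 0 ≤ t → primitive φ t ≤ primitive g t) : 0 ≤ ⟪g - p, p⟫_ℝ := by
  have hgφ : 0 ≤ ⟪g - φ, p⟫_ℝ := real_inner_nonneg_of_mem_V1 hp.1 fun t ht => by
    rw [primitive_sub]; linarith [hg t ht]
  have hφp : ⟪φ - p, p⟫_ℝ = 0 := IsProj.real_inner_self_eq_zero_of_cone (C := V1Cone) hp
  rw [← sub_add_sub_cancel g φ p, inner_add_left, hφp, add_zero]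
  exact hgφ

theorem addPrim_update_zero {d : ℕ} (Φ : HD d) (i : Fin d) (s : ℝ) :
    addPrim Φ (Function.update 0 i s) = primitive (Φ i) s := by
  refine (Finset.sum_eq_single i (fun j _ hj => ?_) (by simp)).trans (by simp)
  simp [Function.update_of_ne hj, primitive_of_nonpos]

theorem primitive_le_of_addPrim_le {d : ℕ} {Φ g : HD d}
    (h : ∀ t : Fin d → ℝ, (∀ i, 0 ≤ t i) → addPrim Φ t ≤ addPrim g t) (i : Fin d) {s : ℝ}
    (hs : 0 ≤ s) : primitive (Φ i) s ≤ primitive (g i) s := by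
  have ht : ∀ j, 0 ≤ Function.update (0 : Fin d → ℝ) i s j := fun j => by
    rcases eq_or_ne j i with rfl | hj <;> simp [*]
  simpa only [addPrim_update_zero] using h _ ht

theorem proj_V2_solves_minimization_general {d : ℕ} (Φ p : HD d)
    (hp : IsProj V2 Φ p) :
    (∀ i, IsProj V1 (Φ i) (p i)) ∧
    (∀ t : Fin d → ℝ, (∀ i, 0 ≤ t i) → addPrim Φ t ≤ addPrim p t) ∧
    (∀ g : HD d, (∀ t : Fin d → ℝ, (∀ i, 0 ≤ t i) → addPrim Φ t ≤ addPrim g t) →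
      ‖p‖ ≤ ‖g‖) ∧
    (∀ g : HD d, (∀ t : Fin d → ℝ, (∀ i, 0 ≤ t i) → addPrim Φ t ≤ addPrim g t) →
      ‖g‖ = ‖p‖ → g = p) := by
  have hcomp : ∀ i, IsProj V1 (Φ i) (p i) := hp.apply_of_pi (A := fun _ => V1)
  have hmin : ∀ g : HD d, (∀ t : Fin d → ℝ, (∀ i, 0 ≤ t i) → addPrim Φ t ≤ addPrim g t) →
      0 ≤ ⟪g - p, p⟫_ℝ := fun g hg => by
    rw [PiLp.inner_apply]
    exact Finset.sum_nonneg fun i _ =>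
      (hcomp i).real_inner_sub_nonneg_of_V1 fun _ hs => primitive_le_of_addPrim_le hg i hs
  exact ⟨hcomp, fun t _ => Finset.sum_le_sum fun i _ => (hcomp i).primitive_le_of_V1 (t i),
    fun g hg => norm_le_of_real_inner_sub_nonneg (hmin g hg),
    fun g hg => eq_of_norm_eq_of_real_inner_sub_nonneg (hmin g hg)⟩

/-- `h̲ = Pr_{V₂} h` is the unique solution of
`min{‖g‖ : g ∈ ℍ_d, g ≥ h on [0,∞)^d}`, and the projection on `V₂` acts
componentwise: the `i`-th component of `Pr_{V₂} h` is `Pr_{V₁} hᵢ`. -/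
theorem proj_V2_solves_minimization {d : ℕ} (hd : 1 ≤ d) (Φ p : HD d)
    (hp : IsProj V2 Φ p) :
    (∀ i, IsProj V1 (Φ i) (p i)) ∧
    (∀ t : Fin d → ℝ, (∀ i, 0 ≤ t i) → addPrim Φ t ≤ addPrim p t) ∧
    (∀ g : HD d, (∀ t : Fin d → ℝ, (∀ i, 0 ≤ t i) → addPrim Φ t ≤ addPrim g t) →
      ‖p‖ ≤ ‖g‖) ∧
    (∀ g : HD d, (∀ t : Fin d → ℝ, (∀ i, 0 ≤ t i) → addPrim Φ t ≤ addPrim g t) →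
      ‖g‖ = ‖p‖ → g = p) :=
  proj_V2_solves_minimization_general Φ p hp
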